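/- Let k ≥ 2, n ≥ 1, 0 ≤ m < n, and let j = gcd(mk + k − 1, n + 1). The group G = ⟨α, β, y | α = y^{-k}β^{k-1}, [β, y^k] = 1, α(αβ)^m = 1, β(αβ)^{n-m} = 1⟩ has y^k central, and the quotient G/⟨⟨y^k⟩⟩ is isomorphic to the free product Z_k * Z_j. -/

import Mathlib

/-- `G = ⟨α, β, y | α = y^{-k}β^{k-1}, [β, y^k] = 1, α(αβ)^m = 1, β(αβ)^{n-m} = 1⟩`,
generators `α = of 0`, `β = of 1`, `y = of 2`. -/
def relsFam1 (k n m : ℕ) : Set (FreeGroup (Fin 3)) :=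
  let a := FreeGroup.of (0 : Fin 3)
  let b := FreeGroup.of (1 : Fin 3)
  let y := FreeGroup.of (2 : Fin 3)
  {a * ((y ^ k)⁻¹ * b ^ (k - 1))⁻¹,
   b * y ^ k * b⁻¹ * (y ^ k)⁻¹,
   a * (a * b) ^ m,
   b * (a * b) ^ (n - m)}

/-!
`β` commutes with `y^k` by the second relation, hence so does `α = y^{-k}β^{k-1}`, and `y^k` is
central. Modulo `y^k` the first relation reads `α = β^(k-1)`, so `αβ = β^k` and the last two
relations become `β^(k-1+km) = 1` and `β^(k(n-m)+1) = 1`. The quotient is therefore presented by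
`⟨y, β | y^k, β^d⟩` with `d = gcd(k-1+km, k(n-m)+1)`, i.e. it is `ℤ/k ∗ ℤ/d`. The two exponents
add up to `k(n+1)` and `k-1+km ≡ -1 (mod k)` is prime to `k`, so `d = gcd(mk+k-1, n+1)`.
-/

open Multiplicative

section ZModLift

variable {H : Type*} [Group H] {N : ℕ}

theorem ofAdd_one_pow_eq_one_iff {t : ℕ} : ofAdd (1 : ZMod N) ^ t = 1 ↔ N ∣ t := by
  rw [← orderOf_dvd_iff_pow_eq_one, orderOf_ofAdd_eq_addOrderOf, ZMod.addOrderOf_one]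

theorem map_ofAdd_one_pow_eq_one (f : Multiplicative (ZMod N) →* H) {t : ℕ} (h : N ∣ t) :
    f (ofAdd 1) ^ t = 1 := by
  rw [← map_pow, ofAdd_one_pow_eq_one_iff.mpr h, map_one]

theorem MonoidHom.ext_mzmod {f g : Multiplicative (ZMod N) →* H}
    (h : f (ofAdd 1) = g (ofAdd 1)) : f = g := by
  let c : Multiplicative ℤ →* Multiplicative (ZMod N) :=
    (Int.castAddHom (ZMod N)).toMultiplicative
  have hc : Function.Surjective c := ZMod.intCast_surjective
  have : f.comp c = g.comp c := MonoidHom.ext_mint (by simpa [c] using h)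
  exact MonoidHom.ext fun x => by
    obtain ⟨x, rfl⟩ := hc x
    exact DFunLike.congr_fun this x

noncomputable def ZMod.mulLift (g : H) (hg : g ^ N = 1) : Multiplicative (ZMod N) →* H :=
  AddMonoidHom.toMultiplicativeLeft
    (ZMod.lift N ⟨zmultiplesHom (Additive H) (Additive.ofMul g), by
      simp only [zmultiplesHom_apply, ← ofMul_zpow, zpow_natCast, hg, ofMul_one]⟩)

@[simp]
theorem ZMod.mulLift_ofAdd_one (g : H) (hg : g ^ N = 1) : ZMod.mulLift g hg (ofAdd 1) = g := by
  simpa [ZMod.mulLift] using congrArg Additive.toMul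
    (ZMod.lift_coe N ⟨zmultiplesHom (Additive H) (Additive.ofMul g), _⟩ 1)

end ZModLift

section PowPred

variable {M : Type*} [Monoid M] {k : ℕ} (b : M)

theorem pow_pred_mul_pow_pred_mul_pow (hk : k ≠ 0) (r : ℕ) :
    b ^ (k - 1) * (b ^ (k - 1) * b) ^ r = b ^ (k - 1 + k * r) := by
  rw [pow_sub_one_mul hk, ← pow_mul, ← pow_add]

theorem mul_pow_pred_mul_pow (hk : k ≠ 0) (r : ℕ) :
    b * (b ^ (k - 1) * b) ^ r = b ^ (k * r + 1) := by
  rw [pow_sub_one_mul hk, ← pow_mul, ← pow_succ']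

end PowPred

namespace Fam1

theorem gcd_exponents_eq {k n m : ℕ} (hk : k ≠ 0) (hm : m ≤ n) :
    Nat.gcd (k - 1 + k * m) (k * (n - m) + 1) = Nat.gcd (m * k + k - 1) (n + 1) := by
  obtain ⟨k, rfl⟩ := Nat.exists_eq_succ_of_ne_zero hk
  obtain ⟨t, rfl⟩ := Nat.exists_eq_add_of_le hm
  have hA : m * (k + 1) + (k + 1) - 1 = k + (k + 1) * m := Nat.sub_eq_of_eq_add (by ring)
  have hcop : Nat.Coprime (k + 1) (k + (k + 1) * m) := by
    rw [Nat.coprime_add_mul_left_right, Nat.coprime_self_add_left]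
    exact Nat.coprime_one_left k
  simp only [Nat.succ_eq_add_one, Nat.add_sub_cancel, Nat.add_sub_cancel_left, hA]
  have hsum : k + (k + 1) * m + ((k + 1) * t + 1) = (k + 1) * (m + t + 1) := by ring
  rw [← Nat.gcd_self_add_right, hsum, hcop.gcd_mul_left_cancel_right]

variable (k n m : ℕ)

local notation "G" => PresentedGroup (relsFam1 k n m)
local notation "α" => (PresentedGroup.of 0 : G)
local notation "β" => (PresentedGroup.of 1 : G)
local notation "y" => (PresentedGroup.of 2 : G)

theorem of_zero_eq : α = (y ^ k)⁻¹ * β ^ (k - 1) :=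
  PresentedGroup.mk_eq_mk_of_mul_inv_mem (by simp [relsFam1])

theorem commute_of_one_of_two_pow : Commute β (y ^ k) := by
  have h : β * y ^ k * β⁻¹ * (y ^ k)⁻¹ = 1 := PresentedGroup.one_of_mem (by simp [relsFam1])
  rwa [mul_inv_eq_one, mul_inv_eq_iff_eq_mul] at h

theorem of_zero_mul_pow : α * (α * β) ^ m = 1 :=
  PresentedGroup.one_of_mem (by simp [relsFam1])

theorem of_one_mul_pow : β * (α * β) ^ (n - m) = 1 :=
  PresentedGroup.one_of_mem (by simp [relsFam1])

theorem of_two_pow_mem_center : y ^ k ∈ Subgroup.center G := by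
  rw [Subgroup.mem_center_iff]
  intro g
  suffices g ∈ Subgroup.centralizer {y ^ k} from Subgroup.mem_centralizer_singleton_iff.mp this
  refine PresentedGroup.generated_by _ _ (fun i => Subgroup.mem_centralizer_singleton_iff.mpr ?_) g
  have hβ := commute_of_one_of_two_pow k n m
  fin_cases i
  · show Commute α _
    rw [of_zero_eq]
    exact ((Commute.refl _).inv_left).mul_left (hβ.pow_left _)
  · exact hβ
  · exact (Commute.refl _).pow_right _

local notation "Q" => G ⧸ Subgroup.normalClosure ({y ^ k} : Set G)
local notation "C" j => Monoid.Coprod (Multiplicative (ZMod k)) (Multiplicative (ZMod j))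
local notation "d" => Nat.gcd (k - 1 + k * m) (k * (n - m) + 1)

theorem mk_of_two_pow : (y : Q) ^ k = 1 := by
  rw [← QuotientGroup.mk_pow, QuotientGroup.eq_one_iff]
  exact Subgroup.subset_normalClosure rfl

theorem mk_of_zero : (α : Q) = (β : Q) ^ (k - 1) := by
  rw [of_zero_eq, QuotientGroup.mk_mul, QuotientGroup.mk_inv, QuotientGroup.mk_pow,
    mk_of_two_pow, inv_one, one_mul, QuotientGroup.mk_pow]

variable {k}

theorem mk_of_one_pow_gcd (hk : k ≠ 0) :
    (β : Q) ^ d = 1 := by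
  have h₁ := congrArg ((↑) : G → Q) (of_zero_mul_pow k n m)
  have h₂ := congrArg ((↑) : G → Q) (of_one_mul_pow k n m)
  simp only [QuotientGroup.mk_mul, QuotientGroup.mk_pow, QuotientGroup.mk_one, mk_of_zero,
    pow_pred_mul_pow_pred_mul_pow _ hk, mul_pow_pred_mul_pow _ hk] at h₁ h₂
  rw [← orderOf_dvd_iff_pow_eq_one]
  exact Nat.dvd_gcd (orderOf_dvd_of_pow_eq_one h₁) (orderOf_dvd_of_pow_eq_one h₂)

variable {n m} in
theorem lift_relsFam1_eq_one {H : Type*} [Group H] (hk : k ≠ 0) {x z : H} (hx : x ^ k = 1)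
    (h₁ : z ^ (k - 1 + k * m) = 1) (h₂ : z ^ (k * (n - m) + 1) = 1) :
    ∀ r ∈ relsFam1 k n m, FreeGroup.lift ![z ^ (k - 1), z, x] r = 1 := by
  simp only [relsFam1, Set.mem_insert_iff, Set.mem_singleton_iff]
  rintro r (rfl | rfl | rfl | rfl) <;>
    simp [hx, pow_pred_mul_pow_pred_mul_pow _ hk, mul_pow_pred_mul_pow _ hk, h₁, h₂]

noncomputable def toCoprod (hk : k ≠ 0) : Q →* C d :=
  QuotientGroup.lift _
    (PresentedGroup.toGroup (lift_relsFam1_eq_one hk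
      (map_ofAdd_one_pow_eq_one (H := C d) Monoid.Coprod.inl dvd_rfl)
      (map_ofAdd_one_pow_eq_one (H := C d) Monoid.Coprod.inr (Nat.gcd_dvd_left _ _))
      (map_ofAdd_one_pow_eq_one (H := C d) Monoid.Coprod.inr (Nat.gcd_dvd_right _ _)))) <| by
    refine Subgroup.normalClosure_le_normal
      (Set.singleton_subset_iff.mpr (MonoidHom.mem_ker.mpr ?_))
    rw [map_pow, PresentedGroup.toGroup.of]
    exact map_ofAdd_one_pow_eq_one (H := C d) Monoid.Coprod.inl dvd_rfl

@[simp]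
theorem toCoprod_mk_of (hk : k ≠ 0) (i : Fin 3) :
    toCoprod n m hk (PresentedGroup.of i : G) =
      ![.inr (ofAdd 1) ^ (k - 1), .inr (ofAdd 1), .inl (ofAdd 1)] i := by
  simp [toCoprod, PresentedGroup.toGroup.of]

noncomputable def ofCoprod (hk : k ≠ 0) : (C d) →* Q :=
  Monoid.Coprod.lift (ZMod.mulLift _ (mk_of_two_pow k n m))
    (ZMod.mulLift _ (mk_of_one_pow_gcd n m hk))

theorem toCoprod_comp_ofCoprod (hk : k ≠ 0) :
    (toCoprod n m hk).comp (ofCoprod n m hk) = MonoidHom.id _ := by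
  refine Monoid.Coprod.hom_ext (MonoidHom.ext_mzmod ?_) (MonoidHom.ext_mzmod ?_) <;>
    simp [ofCoprod]

theorem ofCoprod_comp_toCoprod (hk : k ≠ 0) :
    (ofCoprod n m hk).comp (toCoprod n m hk) = MonoidHom.id Q := by
  refine QuotientGroup.monoidHom_ext _ (PresentedGroup.ext fun i => ?_)
  fin_cases i <;> simp [ofCoprod, mk_of_zero]

noncomputable def quotientEquivCoprod (hk : k ≠ 0) : Q ≃* C d :=
  MonoidHom.toMulEquiv _ _ (ofCoprod_comp_toCoprod n m hk) (toCoprod_comp_ofCoprod n m hk)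

end Fam1

theorem stmt_13_general (k n m : ℕ) (hk : 2 ≤ k) (hm : m < n)
    (j : ℕ) (hj : j = Nat.gcd (m * k + k - 1) (n + 1)) :
    ((PresentedGroup.of 2 : PresentedGroup (relsFam1 k n m)) ^ k ∈
      Subgroup.center (PresentedGroup (relsFam1 k n m))) ∧
    Nonempty
      ((PresentedGroup (relsFam1 k n m) ⧸
          Subgroup.normalClosure
            ({(PresentedGroup.of 2 : PresentedGroup (relsFam1 k n m)) ^ k} :
              Set (PresentedGroup (relsFam1 k n m)))) ≃*
        Monoid.Coprod (Multiplicative (ZMod k)) (Multiplicative (ZMod j))) := by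
  have hk₀ : k ≠ 0 := by omega
  refine ⟨Fam1.of_two_pow_mem_center k n m, ?_⟩
  rw [hj, ← Fam1.gcd_exponents_eq hk₀ hm.le]
  exact ⟨Fam1.quotientEquivCoprod n m hk₀⟩

/-- In the group of the curves of family (1), `y^k` is central and the quotient by
its normal closure is `ℤ/k ∗ ℤ/j`, where `j = gcd(mk + k − 1, n + 1)`. -/
theorem stmt_13 (k n m : ℕ) (hk : 2 ≤ k) (hn : 1 ≤ n) (hm : m < n)
    (j : ℕ) (hj : j = Nat.gcd (m * k + k - 1) (n + 1)) :
    ((PresentedGroup.of 2 : PresentedGroup (relsFam1 k n m)) ^ k ∈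
      Subgroup.center (PresentedGroup (relsFam1 k n m))) ∧
    Nonempty
      ((PresentedGroup (relsFam1 k n m) ⧸
          Subgroup.normalClosure
            ({(PresentedGroup.of 2 : PresentedGroup (relsFam1 k n m)) ^ k} :
              Set (PresentedGroup (relsFam1 k n m)))) ≃*
        Monoid.Coprod (Multiplicative (ZMod k)) (Multiplicative (ZMod j))) :=
  stmt_13_general k n m hk hm j hj
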